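/- Let 0 < t < 2 be real, set z := t/√(1 − t/2), m := (2z)^{−1/2}, Λ := m⁻³, and u₃ := −m²·(2t − t²/4) − (3/8)mΛ. With g₂(u) := Λ⁴/3072 − Λm³ + (1/48)Λ²(9m² − 4u) + (4/3)u² and g₃(u) := (8/27)u³ + (5/144)Λ²u² − Λu(Λ³ + 768m³ + 288Λm²)/2304 + Λ²(Λ⁴ + 165888m⁴ − 4608Λm³ + 864Λ²m²)/884736, one has g₂(u₃) = (2+t)⁴(4−t)²/(96(2−t)³) and 36·z·(2−t)²·g₃(u₃) = t·(4−t)·(2+t)²·g₂(u₃). In particular g₂(u₃)/(36·g₃(u₃)) = z(2−t)²/((2+t)²·t·(4−t)). -/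

import Mathlib

/-!
With `Λ = m⁻³` and `u₃ = -a/m²`, where `a = (16 + 2t + t²)/(32t)` (this form of `u₃` uses
`m⁴ = (2 - t)/(8t²)`), the invariant `g₂(u₃)` is a polynomial in `a` and `p = m⁻⁴`, and `g₃(u₃)`
is `m²p` times one. Substituting `p = 8t²/(2 - t)` leaves identities between rational functions
of `t`; in particular `g₃(u₃) = m² t (2+t)⁶(4-t)³/(1728(2-t)⁵)`.
-/

noncomputable section

namespace EqualMassNf3

def g2 (Λ m u : ℝ) : ℝ := Λ^4/3072 - Λ*m^3 + (1/48)*Λ^2*(9*m^2 - 4*u) + (4/3)*u^2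

def g3 (Λ m u : ℝ) : ℝ := (8/27)*u^3 + (5/144)*Λ^2*u^2
    - Λ*u*(Λ^3 + 768*m^3 + 288*Λ*m^2)/2304
    + Λ^2*(Λ^4 + 165888*m^4 - 4608*Λ*m^3 + 864*Λ^2*m^2)/884736

lemma g2_inv_cube {m p : ℝ} (a : ℝ) (hm : m ≠ 0) (hp : m^4 * p = 1) :
    g2 (1/m^3) m (-a/m^2) = p^3/3072 - 1 + 3*p/16 + a*p^2/12 + 4/3*a^2*p := by
  obtain rfl : p = 1/m^4 := by field_simp; linear_combination hp
  unfold g2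
  field_simp
  ring

lemma g3_inv_cube {m p : ℝ} (a : ℝ) (hm : m ≠ 0) (hp : m^4 * p = 1) :
    g3 (1/m^3) m (-a/m^2) = m^2 * p * (-(8/27)*a^3*p + 5/144*a^2*p^2
      + a*(p^3 + 288*p + 768)/2304 + (p^4 + 864*p^2 - 4608*p + 165888)/884736) := by
  obtain rfl : p = 1/m^4 := by field_simp; linear_combination hp
  unfold g3
  field_simp
  ring

lemma mass_relations {t z m : ℝ} (ht0 : 0 < t) (ht2 : t < 2) (hz : z = t / √(1 - t/2))
    (hm : m = 1 / √(2*z)) : 0 < m ∧ m^4 = (2 - t)/(8*t^2) ∧ z = 1/(2*m^2) := by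
  have hs : √(1 - t/2)^2 = 1 - t/2 := Real.sq_sqrt (by linarith)
  have hz0 : 0 < z := by rw [hz]; exact div_pos ht0 (Real.sqrt_pos.mpr (by linarith))
  have hm2 : m^2 = 1/(2*z) := by rw [hm, div_pow, Real.sq_sqrt (by positivity)]; ring
  refine ⟨by rw [hm]; positivity, ?_, by rw [hm2]; field_simp⟩
  rw [show m^4 = (m^2)^2 by ring, hm2, div_pow, mul_pow, hz, div_pow, hs]
  field_simp
  ring

lemma u3_eq_neg_div_sq {t m : ℝ} (ht : t ≠ 0) (hm : m ≠ 0) (hm4 : m^4 = (2 - t)/(8*t^2)) :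
    -m^2 * (2*t - t^2/4) - (3/8)*m*(1/m^3) = -((16 + 2*t + t^2)/(32*t))/m^2 := by
  rw [show -m^2 * (2*t - t^2/4) = -(m^4 * (2*t - t^2/4))/m^2 by field_simp, hm4]
  field_simp
  ring

lemma g2_monopole {t m : ℝ} (ht0 : t ≠ 0) (ht2 : t ≠ 2) (hm : m ≠ 0)
    (hm4 : m^4 = (2 - t)/(8*t^2)) :
    g2 (1/m^3) m (-((16 + 2*t + t^2)/(32*t))/m^2) = (2 + t)^4*(4 - t)^2/(96*(2 - t)^3) := by
  have h2t : 2 - t ≠ 0 := sub_ne_zero.mpr (Ne.symm ht2)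
  rw [g2_inv_cube _ hm (p := 8*t^2/(2 - t)) (by rw [hm4]; field_simp)]
  field_simp
  ring

lemma g3_monopole {t m : ℝ} (ht0 : t ≠ 0) (ht2 : t ≠ 2) (hm : m ≠ 0)
    (hm4 : m^4 = (2 - t)/(8*t^2)) :
    g3 (1/m^3) m (-((16 + 2*t + t^2)/(32*t))/m^2)
      = m^2 * t*(2 + t)^6*(4 - t)^3/(1728*(2 - t)^5) := by
  have h2t : 2 - t ≠ 0 := sub_ne_zero.mpr (Ne.symm ht2)
  rw [g3_inv_cube _ hm (p := 8*t^2/(2 - t)) (by rw [hm4]; field_simp)]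
  field_simp
  ring

end EqualMassNf3

end

theorem stmt_6 (t z m Λ u3 : ℝ) (ht0 : 0 < t) (ht2 : t < 2)
    (hz : z = t / Real.sqrt (1 - t/2))
    (hm : m = 1 / Real.sqrt (2*z))
    (hΛ : Λ = 1 / m^3)
    (hu3 : u3 = -m^2 * (2*t - t^2/4) - (3/8)*m*Λ)
    (g2 g3 : ℝ → ℝ)
    (hg2 : ∀ v, g2 v = Λ^4/3072 - Λ*m^3 + (1/48)*Λ^2*(9*m^2 - 4*v) + (4/3)*v^2)
    (hg3 : ∀ v, g3 v = (8/27)*v^3 + (5/144)*Λ^2*v^2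
        - Λ*v*(Λ^3 + 768*m^3 + 288*Λ*m^2)/2304
        + Λ^2*(Λ^4 + 165888*m^4 - 4608*Λ*m^3 + 864*Λ^2*m^2)/884736) :
    g2 u3 = (2 + t)^4*(4 - t)^2/(96*(2 - t)^3) ∧
    36*z*(2 - t)^2 * g3 u3 = t*(4 - t)*(2 + t)^2 * g2 u3 ∧
    g2 u3 / (36 * g3 u3) = z*(2 - t)^2/((2 + t)^2*t*(4 - t)) := by
  obtain ⟨hm0, hm4, hzm⟩ := EqualMassNf3.mass_relations ht0 ht2 hz hm
  have ht0' : t ≠ 0 := ht0.ne'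
  have ht2' : t ≠ 2 := ht2.ne
  have h4t : 4 - t ≠ 0 := by linarith
  have h2t : 2 - t ≠ 0 := by linarith
  subst hΛ
  rw [EqualMassNf3.u3_eq_neg_div_sq ht0' hm0.ne' hm4] at hu3
  subst hu3
  have e2 := (hg2 _).trans (EqualMassNf3.g2_monopole ht0' ht2' hm0.ne' hm4)
  have e3 := (hg3 _).trans (EqualMassNf3.g3_monopole ht0' ht2' hm0.ne' hm4)
  refine ⟨e2, ?_, ?_⟩ <;> rw [e2, e3, hzm] <;> field_simp <;> ring
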